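/- arXiv:1810.08585 — 2 statements merged into one kernel-verified Lean document; each statement's English description precedes it below -/
import Mathlib

section
/- For a distributive meet-semilattice A, the complete lattice Up(X(A)) of upsets of the poset of irreducible filters of A, with the embedding β, is a canonical extension of A: β is a semilattice embedding, the extension is dense (each upset is the union of the closed elements below it and the intersection of the open elements above it) and compact. -/
/-! Everything rests on the prime filter theorem: in a distributive meet-semilattice a filter
disjoint from a nonempty order ideal extends to an irreducible filter still disjoint from it
(Zorn, plus distributivity, which makes the complement of a maximal such filter updirected).
Applied to the upward closure of `D` and the downward closure of `U` it gives compactness, and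
for `D = {a}`, `U = {b}` it shows that `β` reflects the order. Density is then formal: the closed
element of the filter `P` is `Ici P`, and the open element of the ideal `Pᶜ` is `(Iic P)ᶜ`. -/

namespace DS

variable {A : Type*} [SemilatticeInf A] [OrderTop A]

/-- A filter: an upset containing the top element, closed under meets. -/
def IsFilt (F : Set A) : Prop :=
  IsUpperSet F ∧ ⊤ ∈ F ∧ ∀ ⦃a b : A⦄, a ∈ F → b ∈ F → a ⊓ b ∈ F

/-- An irreducible (prime) filter: a proper filter that is meet-irreducible
among filters. -/
def IsIrred (F : Set A) : Prop :=
  IsFilt F ∧ F ≠ Set.univ ∧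
    ∀ F₁ F₂ : Set A, IsFilt F₁ → IsFilt F₂ → F = F₁ ∩ F₂ → F = F₁ ∨ F = F₂

/-- An order ideal: a downset in which every pair of elements has an upper
bound in the set. -/
def IsOrdIdeal (I : Set A) : Prop :=
  IsLowerSet I ∧ ∀ a ∈ I, ∀ b ∈ I, ∃ c ∈ I, a ≤ c ∧ b ≤ c

/-- Distributivity for a meet-semilattice with top. -/
def IsDistrib (A : Type*) [SemilatticeInf A] [OrderTop A] : Prop :=
  ∀ a b c : A, a ⊓ b ≤ c → ∃ a₁ b₁ : A, a ≤ a₁ ∧ b ≤ b₁ ∧ c = a₁ ⊓ b₁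

/-- The set of irreducible filters of `A`, ordered by inclusion. -/
def Spec (A : Type*) [SemilatticeInf A] [OrderTop A] : Type _ :=
  {P : Set A // IsIrred P}

instance : PartialOrder (Spec A) := Subtype.partialOrder _

/-- `beta a` = the set of irreducible filters containing `a`. -/
def beta (a : A) : Set (Spec A) := {P : Spec A | a ∈ P.1}

/-- The topology on `Spec A` generated by the basis `{beta aᶜ : a ∈ A}`. -/
def specTop (A : Type*) [SemilatticeInf A] [OrderTop A] : TopologicalSpace (Spec A) :=
  TopologicalSpace.generateFrom {s : Set (Spec A) | ∃ a : A, s = (beta a)ᶜ}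

/-- Special basic saturated subsets: intersections of dually directed families
of basic opens `beta aᶜ`. -/
def SBS (Z : Set (Spec A)) : Prop :=
  ∃ L : Set A, (∀ a ∈ L, ∀ b ∈ L, ∃ c ∈ L, beta a ∪ beta b ⊆ beta c) ∧
    Z = ⋂ a ∈ L, (beta a)ᶜ

/-- The order ideal associated to a special basic saturated set. -/
def IA (Z : Set (Spec A)) : Set A := {a : A | beta a ∩ Z = ∅}

/-- The special basic saturated set associated to an order ideal. -/
def alphaI (I : Set A) : Set (Spec A) := {P : Spec A | P.1 ∩ I = ∅}

/-- The filter associated to a closed set. -/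
def FY (Y : Set (Spec A)) : Set A := {a : A | Y ⊆ beta a}

/-- The multirelation `R_m` on the dual space. -/
def Rm (m : A → A) (P : Spec A) (Z : Set (Spec A)) : Prop :=
  {a : A | m a ∈ P.1} ∩ IA Z = ∅

/-- The multirelation `G_m` on the dual space. -/
def Gm (m : A → A) (P : Spec A) (Y : Set (Spec A)) : Prop :=
  FY Y ⊆ {a : A | m a ∈ P.1}

/-- The composed relation `R_m²`. -/
def Rm2 (m : A → A) (P : Spec A) (Z : Set (Spec A)) : Prop :=
  ∃ S : Set (Spec A), SBS S ∧ Rm m P S ∧ ∀ x ∈ S, Rm m x Z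

open Set

section Filters

variable {A : Type*} [SemilatticeInf A] [OrderTop A]

/-- The filter generated by `P ∪ {a}` when `P` is a filter. -/
def adjoin (P : Set A) (a : A) : Set A := {x | ∃ p ∈ P, p ⊓ a ≤ x}

omit [OrderTop A] in
lemma subset_adjoin (P : Set A) (a : A) : P ⊆ adjoin P a :=
  fun p hp => ⟨p, hp, inf_le_left⟩

lemma mem_adjoin_self {P : Set A} (hP : IsFilt P) (a : A) : a ∈ adjoin P a :=
  ⟨⊤, hP.2.1, inf_le_right⟩

lemma isFilt_adjoin {P : Set A} (hP : IsFilt P) (a : A) : IsFilt (adjoin P a) := by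
  refine ⟨fun x y hxy ⟨p, hp, h⟩ => ⟨p, hp, h.trans hxy⟩, ⟨⊤, hP.2.1, le_top⟩,
    fun x y ⟨p, hp, hpx⟩ ⟨q, hq, hqy⟩ => ⟨p ⊓ q, hP.2.2 hp hq, ?_⟩⟩
  exact le_inf ((inf_le_inf_right a inf_le_left).trans hpx)
    ((inf_le_inf_right a inf_le_right).trans hqy)

lemma isFilt_upperClosure {D : Set A} (hD : D.Nonempty) (hDd : DirectedOn (· ≥ ·) D) :
    IsFilt (upperClosure D : Set A) := by
  refine ⟨(upperClosure D).upper, hD.elim fun d hd => ⟨d, hd, le_top⟩, ?_⟩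
  rintro x y ⟨d, hd, hdx⟩ ⟨e, he, hey⟩
  obtain ⟨c, hc, hcd, hce⟩ := hDd d hd e he
  exact ⟨c, hc, le_inf (hcd.trans hdx) (hce.trans hey)⟩

omit [OrderTop A] in
lemma isOrdIdeal_lowerClosure {U : Set A} (hUd : DirectedOn (· ≤ ·) U) :
    IsOrdIdeal (lowerClosure U : Set A) := by
  refine ⟨(lowerClosure U).lower, ?_⟩
  rintro x ⟨u, hu, hxu⟩ y ⟨v, hv, hyv⟩
  obtain ⟨c, hc, huc, hvc⟩ := hUd u hu v hv
  exact ⟨c, ⟨c, hc, le_rfl⟩, hxu.trans huc, hyv.trans hvc⟩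

lemma isIrred_of_directedOn_compl {P : Set A} (hP : IsFilt P) (hPne : P ≠ univ)
    (hdir : DirectedOn (· ≤ ·) Pᶜ) : IsIrred P := by
  refine ⟨hP, hPne, fun F₁ F₂ hF₁ hF₂ hPF => ?_⟩
  by_contra! hne
  obtain ⟨a, ha₁, haP⟩ :=
    not_subset.mp fun h => hne.1 (subset_antisymm (hPF ▸ inter_subset_left) h)
  obtain ⟨b, hb₂, hbP⟩ :=
    not_subset.mp fun h => hne.2 (subset_antisymm (hPF ▸ inter_subset_right) h)
  obtain ⟨c, hcP, hac, hbc⟩ := hdir a haP b hbP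
  exact hcP (hPF ▸ ⟨hF₁.1 hac ha₁, hF₂.1 hbc hb₂⟩)

lemma IsDistrib.exists_eq_inf_of_inf_le (hA : IsDistrib A) {r a b x : A} (ha : r ⊓ a ≤ x)
    (hb : r ⊓ b ≤ x) :
    ∃ r' c, r ≤ r' ∧ a ≤ c ∧ b ≤ c ∧ x = r' ⊓ c := by
  obtain ⟨r₁, a₁, hr₁, ha₁, rfl⟩ := hA r a x ha
  obtain ⟨r₂, c, hr₂, hbc, rfl⟩ := hA r b a₁ (hb.trans inf_le_right)
  exact ⟨r₁ ⊓ r₂, c, le_inf hr₁ hr₂, ha₁.trans inf_le_right, hbc, by rw [inf_assoc]⟩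

variable (hA : IsDistrib A)
include hA

lemma exists_le_of_mem_adjoin {P : Set A} (hP : IsFilt P) {a b x : A}
    (ha : x ∈ adjoin P a) (hb : x ∈ adjoin P b) : ∃ c, a ≤ c ∧ b ≤ c ∧ (c ∈ P → x ∈ P) := by
  obtain ⟨p, hp, hpa⟩ := ha
  obtain ⟨q, hq, hqb⟩ := hb
  obtain ⟨r, c, hpqr, hac, hbc, rfl⟩ := hA.exists_eq_inf_of_inf_le
    ((inf_le_inf_right a inf_le_left).trans hpa) ((inf_le_inf_right b inf_le_right).trans hqb)
  exact ⟨c, hac, hbc, fun hc => hP.2.2 (hP.1 hpqr (hP.2.2 hp hq)) hc⟩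

lemma IsIrred.directedOn_compl {P : Set A} (hP : IsIrred P) : DirectedOn (· ≤ ·) Pᶜ := by
  intro a ha b hb
  have hsub : P ⊆ adjoin P a ∩ adjoin P b := subset_inter (subset_adjoin P a) (subset_adjoin P b)
  have hne : P ≠ adjoin P a ∩ adjoin P b := fun h => by
    rcases hP.2.2 _ _ (isFilt_adjoin hP.1 a) (isFilt_adjoin hP.1 b) h with hPa | hPb
    exacts [ha (hPa ▸ mem_adjoin_self hP.1 a), hb (hPb ▸ mem_adjoin_self hP.1 b)]
  obtain ⟨x, ⟨hxa, hxb⟩, hxP⟩ := not_subset.mp fun h => hne (subset_antisymm hsub h)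
  obtain ⟨c, hac, hbc, hcx⟩ := exists_le_of_mem_adjoin hA hP.1 hxa hxb
  exact ⟨c, mt hcx hxP, hac, hbc⟩

lemma IsIrred.isOrdIdeal_compl {P : Set A} (hP : IsIrred P) : IsOrdIdeal Pᶜ :=
  ⟨hP.1.1.compl, hP.directedOn_compl hA⟩

omit hA in
lemma exists_maximal_isFilt_disjoint {F I : Set A} (hF : IsFilt F) (hFI : Disjoint F I) :
    ∃ P, F ⊆ P ∧ Maximal (fun G => IsFilt G ∧ Disjoint G I) P := by
  refine zorn_subset_nonempty _ (fun c hcS hc ⟨G₀, hG₀⟩ => ?_) F ⟨hF, hFI⟩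
  refine ⟨⋃₀ c, ⟨⟨?_, ⟨G₀, hG₀, (hcS hG₀).1.2.1⟩, ?_⟩, ?_⟩, fun G hG => subset_sUnion_of_mem hG⟩
  · rintro x y hxy ⟨G, hG, hxG⟩
    exact ⟨G, hG, (hcS hG).1.1 hxy hxG⟩
  · rintro x y ⟨G, hG, hxG⟩ ⟨G', hG', hyG'⟩
    rcases hc.total hG hG' with h | h
    · exact ⟨G', hG', (hcS hG').1.2.2 (h hxG) hyG'⟩
    · exact ⟨G, hG, (hcS hG).1.2.2 hxG (h hyG')⟩
  · exact disjoint_sUnion_left.mpr fun G hG => (hcS hG).2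

/-- Prime filter theorem. A maximal filter `P` disjoint from `I` has updirected complement:
for `a, b ∉ P` both `adjoin P a` and `adjoin P b` meet `I`, hence share an element of `I`. -/
lemma exists_isIrred_of_disjoint {F I : Set A} (hF : IsFilt F) (hI : IsOrdIdeal I)
    (hIne : I.Nonempty) (hFI : Disjoint F I) : ∃ P, IsIrred P ∧ F ⊆ P ∧ Disjoint P I := by
  obtain ⟨P, hFP, ⟨hP, hPI⟩, hmax⟩ := exists_maximal_isFilt_disjoint hF hFI
  have hmeet : ∀ a ∉ P, ∃ i ∈ I, i ∈ adjoin P a := fun a ha => by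
    by_contra! h
    exact ha (hmax ⟨isFilt_adjoin hP a, disjoint_right.mpr h⟩ (subset_adjoin P a)
      (mem_adjoin_self hP a))
  refine ⟨P, isIrred_of_directedOn_compl hP ?_ fun a ha b hb => ?_, hFP, hPI⟩
  · obtain ⟨i, hi⟩ := hIne
    exact fun h => disjoint_left.mp hPI (h ▸ mem_univ i) hi
  obtain ⟨i₁, hi₁, hi₁a⟩ := hmeet a ha
  obtain ⟨i₂, hi₂, hi₂b⟩ := hmeet b hb
  obtain ⟨i, hi, h₁, h₂⟩ := hI.2 i₁ hi₁ i₂ hi₂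
  obtain ⟨c, hac, hbc, hci⟩ := exists_le_of_mem_adjoin hA hP
    ((isFilt_adjoin hP a).1 h₁ hi₁a) ((isFilt_adjoin hP b).1 h₂ hi₂b)
  exact ⟨c, fun hcP => disjoint_left.mp hPI (hci hcP) hi, hac, hbc⟩

end Filters

section DualSpace

variable {A : Type*} [SemilatticeInf A] [OrderTop A]

lemma beta_inf (a b : A) : beta (a ⊓ b) = beta a ∩ beta b := by
  ext P
  exact ⟨fun h => ⟨P.2.1.1 inf_le_left h, P.2.1.1 inf_le_right h⟩, fun h => P.2.1.2.2 h.1 h.2⟩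

lemma beta_top : beta (⊤ : A) = univ :=
  eq_univ_of_forall fun P => P.2.1.2.1

lemma isUpperSet_beta (a : A) : IsUpperSet (beta a) :=
  fun _ _ hPQ haP => hPQ haP

lemma biInter_beta_eq_Ici (P : Spec A) : ⋂ a ∈ P.1, beta a = Ici P := by
  ext Q
  simp only [mem_iInter₂, mem_Ici]
  rfl

lemma biUnion_beta_compl_eq_compl_Iic (P : Spec A) : ⋃ a ∈ P.1ᶜ, beta a = (Iic P)ᶜ := by
  ext Q
  simp only [mem_iUnion₂, mem_compl_iff, mem_Iic, exists_prop]
  exact ⟨fun ⟨a, haP, haQ⟩ hQP => haP (hQP haQ),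
    fun h => (not_subset.mp h).imp fun _ h => h.symm⟩

lemma sUnion_closed_eq {U : Set (Spec A)} (hU : IsUpperSet U) :
    ⋃₀ {C | (∃ F : Set A, IsFilt F ∧ C = ⋂ a ∈ F, beta a) ∧ C ⊆ U} = U := by
  refine subset_antisymm (fun P ⟨C, ⟨_, hCU⟩, hPC⟩ => hCU hPC) fun P hP => ?_
  refine ⟨⋂ a ∈ P.1, beta a, ⟨⟨P.1, P.2.1, rfl⟩, ?_⟩, ?_⟩
  · rw [biInter_beta_eq_Ici]
    exact fun Q hPQ => hU hPQ hP
  · rw [biInter_beta_eq_Ici]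
    exact self_mem_Ici

variable (hA : IsDistrib A)
include hA

lemma sInter_open_eq {U : Set (Spec A)} (hU : IsUpperSet U) :
    ⋂₀ {O | (∃ I : Set A, IsOrdIdeal I ∧ O = ⋃ a ∈ I, beta a) ∧ U ⊆ O} = U := by
  refine subset_antisymm (fun P hP => ?_) fun P hP O hO => hO.2 hP
  by_contra hPU
  have hUO : U ⊆ ⋃ a ∈ P.1ᶜ, beta a := by
    rw [biUnion_beta_compl_eq_compl_Iic]
    exact fun Q hQ hQP => hPU (hU hQP hQ)
  have hPO := hP _ ⟨⟨P.1ᶜ, P.2.isOrdIdeal_compl hA, rfl⟩, hUO⟩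
  rw [biUnion_beta_compl_eq_compl_Iic] at hPO
  exact hPO self_mem_Iic

lemma exists_le_of_biInter_beta_subset {D U : Set A} (hD : D.Nonempty) (hU : U.Nonempty)
    (hDd : DirectedOn (· ≥ ·) D) (hUd : DirectedOn (· ≤ ·) U)
    (h : ⋂ a ∈ D, beta a ⊆ ⋃ b ∈ U, beta b) : ∃ a ∈ D, ∃ b ∈ U, a ≤ b := by
  by_contra! hDU
  obtain ⟨P, hP, hDP, hPU⟩ := exists_isIrred_of_disjoint hA (isFilt_upperClosure hD hDd)
    (isOrdIdeal_lowerClosure hUd) (hU.mono subset_lowerClosure) <| disjoint_left.mpr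
      fun x ⟨a, ha, hax⟩ ⟨b, hb, hxb⟩ => hDU a ha b hb (hax.trans hxb)
  have hPD : (⟨P, hP⟩ : Spec A) ∈ ⋂ a ∈ D, beta a :=
    mem_iInter₂.mpr fun a ha => hDP (subset_upperClosure ha)
  obtain ⟨b, hb, hbP⟩ := mem_iUnion₂.mp (h hPD)
  exact disjoint_left.mp hPU hbP (subset_lowerClosure hb)

lemma beta_subset_beta_iff {a b : A} : beta a ⊆ beta b ↔ a ≤ b := by
  refine ⟨fun h => ?_, fun hab P haP => P.2.1.1 hab haP⟩
  obtain ⟨_, rfl, _, rfl, hab⟩ := exists_le_of_biInter_beta_subset hA (singleton_nonempty a)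
    (singleton_nonempty b) (directedOn_singleton a) (directedOn_singleton b)
    (by simpa only [biInter_singleton, biUnion_singleton] using h)
  exact hab

lemma beta_injective : Function.Injective (beta : A → Set (Spec A)) := fun _ _ h =>
  le_antisymm ((beta_subset_beta_iff hA).mp h.le) ((beta_subset_beta_iff hA).mp h.ge)

end DualSpace

end DS

open DS Set

theorem stmt6 {A : Type*} [SemilatticeInf A] [OrderTop A] (hA : IsDistrib A) :
    -- β is a semilattice embedding into the complete lattice of upsets
    (Function.Injective (beta : A → Set (Spec A)) ∧
     (∀ a b : A, beta (a ⊓ b) = beta a ∩ beta b) ∧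
     beta (⊤ : A) = (Set.univ : Set (Spec A)) ∧
     (∀ a : A, IsUpperSet (beta a))) ∧
    -- density: every upset is the union of the closed elements below it
    (∀ U : Set (Spec A), IsUpperSet U →
      U = ⋃₀ {C : Set (Spec A) |
        (∃ F : Set A, IsFilt F ∧ C = ⋂ a ∈ F, beta a) ∧ C ⊆ U}) ∧
    -- density: every upset is the intersection of the open elements above it
    (∀ U : Set (Spec A), IsUpperSet U →
      U = ⋂₀ {O : Set (Spec A) |
        (∃ I : Set A, IsOrdIdeal I ∧ O = ⋃ a ∈ I, beta a) ∧ U ⊆ O}) ∧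
    -- compactness
    (∀ D U : Set A, D.Nonempty → U.Nonempty →
      (∀ a ∈ D, ∀ b ∈ D, ∃ c ∈ D, c ≤ a ∧ c ≤ b) →
      (∀ a ∈ U, ∀ b ∈ U, ∃ c ∈ U, a ≤ c ∧ b ≤ c) →
      (⋂ a ∈ D, beta a) ⊆ ⋃ a ∈ U, beta a →
      ∃ x ∈ D, ∃ y ∈ U, x ≤ y) := by
  refine ⟨⟨beta_injective hA, beta_inf, beta_top, isUpperSet_beta⟩,
    fun U hU => (sUnion_closed_eq hU).symm, fun U hU => (sInter_open_eq hA hU).symm,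
    fun _ _ => exists_le_of_biInter_beta_subset hA⟩
end

section
/- Let ⟨A,m⟩ be a monotonic distributive semilattice. Then ma ≤ m²a for all a ∈ A if and only if the relation R_m is transitive, i.e., (P,Z) ∈ R_m² implies (P,Z) ∈ R_m for all irreducible filters P and all Z ∈ S(X(A)). -/
namespace DS

variable {A : Type*} [SemilatticeInf A] [OrderTop A]

/-!
For `m` monotone, `R_m P (β c)ᶜ` holds exactly when `m c ∉ P`. If `m a ≤ m (m a)`, then a
witness `S` of `R_m² P Z` turns any `a ∈ I_A(Z)` with `m a ∈ P` into `m a ∈ I_A(S)` with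
`m (m a) ∈ P`, contradicting `R_m P S`. Conversely, if `m a ≰ m (m a)`, an irreducible filter
`P` with `m a ∈ P` and `m (m a) ∉ P` (prime filter separation, by Zorn) satisfies
`R_m² P (β a)ᶜ` through `S = (β (m a))ᶜ` but not `R_m P (β a)ᶜ`.
-/

open Set

theorem isFilt_sUnion {C : Set (Set A)} (hC : ∀ F ∈ C, IsFilt F)
    (hchain : IsChain (· ⊆ ·) C) (hne : C.Nonempty) : IsFilt (⋃₀ C) := by
  obtain ⟨F₀, hF₀⟩ := hne
  refine ⟨?_, ⟨F₀, hF₀, (hC F₀ hF₀).2.1⟩, ?_⟩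
  · rintro x y hxy ⟨F, hF, hx⟩
    exact ⟨F, hF, (hC F hF).1 hxy hx⟩
  · rintro x y ⟨F₁, hF₁, hx⟩ ⟨F₂, hF₂, hy⟩
    rcases hchain.total hF₁ hF₂ with h | h
    · exact ⟨F₂, hF₂, (hC F₂ hF₂).2.2 (h hx) hy⟩
    · exact ⟨F₁, hF₁, (hC F₁ hF₁).2.2 hx (h hy)⟩

theorem isIrred_of_maximal {F : Set A} {c : A}
    (hmax : Maximal (fun G => IsFilt G ∧ c ∉ G) F) : IsIrred F := by
  refine ⟨hmax.prop.1, fun h => hmax.prop.2 (h ▸ mem_univ c), ?_⟩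
  intro F₁ F₂ hF₁ hF₂ hF
  by_contra! hne
  have hc : ∀ G, IsFilt G → F ⊆ G → F ≠ G → c ∈ G := fun G hG hFG hne => by
    by_contra hcG
    exact hne (hmax.eq_of_subset ⟨hG, hcG⟩ hFG)
  have hc₁ := hc F₁ hF₁ (hF ▸ inter_subset_left) hne.1
  have hc₂ := hc F₂ hF₂ (hF ▸ inter_subset_right) hne.2
  exact hmax.prop.2 (hF ▸ ⟨hc₁, hc₂⟩)

theorem exists_spec_mem_not_mem {b c : A} (h : ¬ b ≤ c) :
    ∃ P : Spec A, b ∈ P.1 ∧ c ∉ P.1 := by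
  have hprin : IsFilt {x : A | b ≤ x} :=
    ⟨fun _ _ hxy hx => hx.trans hxy, le_top, fun _ _ hx hy => le_inf hx hy⟩
  obtain ⟨F, hbF, hmax⟩ := zorn_subset_nonempty {G : Set A | IsFilt G ∧ c ∉ G}
    (fun C hC hchain hne => ⟨⋃₀ C,
      ⟨isFilt_sUnion (fun F hF => (hC hF).1) hchain hne,
        fun ⟨F, hF, hcF⟩ => (hC hF).2 hcF⟩,
      fun _ => subset_sUnion_of_mem⟩)
    _ ⟨hprin, h⟩
  exact ⟨⟨F, isIrred_of_maximal hmax⟩, hbF le_rfl, hmax.prop.2⟩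

theorem le_of_beta_subset {b c : A} (h : beta b ⊆ beta c) : b ≤ c := by
  by_contra hbc
  obtain ⟨P, hbP, hcP⟩ := exists_spec_mem_not_mem hbc
  exact hcP (h hbP)

theorem mem_IA_compl_beta_iff {b c : A} : b ∈ IA (beta c)ᶜ ↔ b ≤ c := by
  simp only [IA, mem_ofPred_eq, inter_compl_nonempty_iff, ← not_nonempty_iff_eq_empty, not_not]
  exact ⟨le_of_beta_subset, fun hbc P hbP => P.2.1.1 hbc hbP⟩

theorem sbs_compl_beta (c : A) : SBS (beta c)ᶜ :=
  ⟨{c}, by simp, by simp⟩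

theorem rm_compl_beta_iff {m : A → A} (hm : Monotone m) {P : Spec A} {c : A} :
    Rm m P (beta c)ᶜ ↔ m c ∉ P.1 := by
  simp only [Rm, eq_empty_iff_forall_notMem, mem_inter_iff, mem_ofPred_eq,
    mem_IA_compl_beta_iff, not_and]
  exact ⟨fun h hc => h c hc le_rfl, fun h b hb hbc => h (P.2.1.1 (hm hbc) hb)⟩

theorem mem_IA_of_forall_rm {m : A → A} {S Z : Set (Spec A)} (hSZ : ∀ x ∈ S, Rm m x Z)
    {a : A} (ha : a ∈ IA Z) : m a ∈ IA S :=
  eq_empty_iff_forall_notMem.2 fun x ⟨hxa, hxS⟩ =>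
    eq_empty_iff_forall_notMem.1 (hSZ x hxS) a ⟨hxa, ha⟩

theorem rm_of_rm2 {m : A → A} (hmm : ∀ a, m a ≤ m (m a)) {P : Spec A} {Z : Set (Spec A)}
    (h : Rm2 m P Z) : Rm m P Z := by
  obtain ⟨S, -, hPS, hSZ⟩ := h
  refine eq_empty_iff_forall_notMem.2 fun a ⟨haP, haZ⟩ => ?_
  exact eq_empty_iff_forall_notMem.1 hPS (m a)
    ⟨P.2.1.1 (hmm a) haP, mem_IA_of_forall_rm hSZ haZ⟩

end DS

open DS Set

theorem stmt16_general {A : Type*} [SemilatticeInf A] [OrderTop A]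
    (m : A → A) (hm : ∀ a b : A, a ≤ b → m a ≤ m b) :
    (∀ a : A, m a ≤ m (m a)) ↔
      ∀ P : Spec A, ∀ Z : Set (Spec A), SBS Z → Rm2 m P Z → Rm m P Z := by
  have hmono : Monotone m := fun a b => hm a b
  refine ⟨fun hmm P Z _ => rm_of_rm2 hmm, fun htr a => ?_⟩
  by_contra h
  obtain ⟨P, haP, hmaP⟩ := exists_spec_mem_not_mem h
  have hRm2 : Rm2 m P (beta a)ᶜ :=
    ⟨(beta (m a))ᶜ, sbs_compl_beta _, (rm_compl_beta_iff hmono).2 hmaP,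
      fun _ hx => (rm_compl_beta_iff hmono).2 hx⟩
  exact (rm_compl_beta_iff hmono).1 (htr P _ (sbs_compl_beta a) hRm2) haP

theorem stmt16 {A : Type*} [SemilatticeInf A] [OrderTop A] (hA : IsDistrib A)
    (m : A → A) (hm : ∀ a b : A, a ≤ b → m a ≤ m b) :
    (∀ a : A, m a ≤ m (m a)) ↔
      ∀ P : Spec A, ∀ Z : Set (Spec A), SBS Z → Rm2 m P Z → Rm m P Z :=
  stmt16_general m hm
end
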